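/- There exists a universal constant g > 0 (independent of m, n, ℓ, ε, η and of the data A, B, C, D(λ), M(λ)) such that the following holds. Let m, n, ℓ be positive integers, ε, η nonnegative integers with t := max(η,ε) ≥ 1, d := ε+η+1, A ∈ F^{ℓ×ℓ}, B ∈ F^{ℓ×n}, C ∈ F^{m×ℓ}, and D(λ) = Σ_{i=0}^d D_i λ^i an m×n polynomial matrix, defining R(λ) := C(λI_ℓ−A)^{−1}B + D(λ). Let S(λ) be the block Kronecker pencil built from A, B, C and an (η+1)m×(ε+1)n pencil M(λ) satisfying D(λ) = (Λ_η(λ)⊗I_m)ᵀ·M(λ)·(Λ_ε(λ)⊗I_n). Assume max(‖A‖_F, ‖B‖_F, ‖C‖_F, ‖D(λ)‖_F) ≤ 1 and ‖M(λ)‖_F ≤ 1. Define s, f₁, f₂, f₃ as in the context and K := √(2·min(ε+1,η+1))·(1+f₁‖S(λ)‖₂)(1+f₂‖S(λ)‖₂)(1+f₃‖S(λ)‖₂)·‖S(λ)‖_F/‖R(λ)‖_F. Then K ≤ g·t⁵·√(m+n) if both ε > 0 and η > 0, and K ≤ g·t^{9/2}·√(m+n) if ε = 0 or η = 0. -/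

import Mathlib

open Matrix
open scoped Kronecker

noncomputable section

/-- The `k × (k+1)` matrix `E_k = [I_k 0]`. -/
def Ek (𝕜 : Type*) [RCLike 𝕜] (k : ℕ) : Matrix (Fin k) (Fin (k+1)) 𝕜 :=
  Matrix.of fun i j => if (j : ℕ) = (i : ℕ) then 1 else 0

/-- The `k × (k+1)` matrix `F_k = [0 I_k]`. -/
def Fk (𝕜 : Type*) [RCLike 𝕜] (k : ℕ) : Matrix (Fin k) (Fin (k+1)) 𝕜 :=
  Matrix.of fun i j => if (j : ℕ) = (i : ℕ) + 1 then 1 else 0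

/-- The standard unit vector `(0, …, 0, 1)ᵀ` of size `k+1`. -/
def evec (𝕜 : Type*) [RCLike 𝕜] (k : ℕ) : Fin (k+1) → 𝕜 :=
  fun i => if (i : ℕ) = k then 1 else 0

variable {𝕜 : Type*} [RCLike 𝕜]

/-- Frobenius norm of a matrix. -/
def frobNorm {p q : Type*} [Fintype p] [Fintype q] (M : Matrix p q 𝕜) : ℝ :=
  Real.sqrt (∑ i, ∑ j, ‖M i j‖ ^ 2)

/-- Spectral norm (largest singular value) of a matrix. -/
def specNorm {p q : Type*} [Fintype p] [Fintype q] [DecidableEq p] (M : Matrix p q 𝕜) : ℝ :=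
  Real.sqrt (⨆ i, (Matrix.isHermitian_mul_conjTranspose_self M).eigenvalues i)

/-- Smallest singular value of a `p × q` matrix with `p ≤ q`
(the `p`-th largest singular value). -/
def sigmaMin {p q : Type*} [Fintype p] [Fintype q] [DecidableEq p] (M : Matrix p q 𝕜) : ℝ :=
  Real.sqrt (⨅ i, (Matrix.isHermitian_mul_conjTranspose_self M).eigenvalues i)

/-- Euclidean norm of a vector. -/
def vecNorm {q : Type*} [Fintype q] (x : q → 𝕜) : ℝ :=
  Real.sqrt (∑ i, ‖x i‖ ^ 2)

/-- Frobenius norm of the pencil `P.1 - λ • P.2`. -/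
def pFrob {p q : Type*} [Fintype p] [Fintype q] (P : Matrix p q 𝕜 × Matrix p q 𝕜) : ℝ :=
  Real.sqrt (frobNorm P.1 ^ 2 + frobNorm P.2 ^ 2)

/-- Spectral norm of the pencil `P.1 - λ • P.2`. -/
def pSpec {p q : Type*} [Fintype p] [Fintype q] [DecidableEq p]
    (P : Matrix p q 𝕜 × Matrix p q 𝕜) : ℝ :=
  Real.sqrt (specNorm P.1 ^ 2 + specNorm P.2 ^ 2)

/-- A 3×3 block matrix. -/
def blocks3 {R1 R2 R3 C1 C2 C3 : Type*}
    (M11 : Matrix R1 C1 𝕜) (M12 : Matrix R1 C2 𝕜) (M13 : Matrix R1 C3 𝕜)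
    (M21 : Matrix R2 C1 𝕜) (M22 : Matrix R2 C2 𝕜) (M23 : Matrix R2 C3 𝕜)
    (M31 : Matrix R3 C1 𝕜) (M32 : Matrix R3 C2 𝕜) (M33 : Matrix R3 C3 𝕜) :
    Matrix (R1 ⊕ (R2 ⊕ R3)) (C1 ⊕ (C2 ⊕ C3)) 𝕜 :=
  Matrix.fromBlocks M11 (Matrix.fromCols M12 M13) (Matrix.fromRows M21 M31)
    (Matrix.fromBlocks M22 M23 M32 M33)

/-- `K̂₂ᵀ C = (e_{η+1} ⊗ I_m) C`. -/
def colUnit {m ℓ : ℕ} (η : ℕ) (C : Matrix (Fin m) (Fin ℓ) 𝕜) :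
    Matrix (Fin (η+1) × Fin m) (Fin ℓ) 𝕜 :=
  Matrix.of fun i j => evec 𝕜 η i.1 * C i.2 j

/-- `B K̂₁ = B (e_{ε+1}ᵀ ⊗ I_n)`. -/
def rowUnit {n ℓ : ℕ} (ε : ℕ) (B : Matrix (Fin ℓ) (Fin n) 𝕜) :
    Matrix (Fin ℓ) (Fin (ε+1) × Fin n) 𝕜 :=
  Matrix.of fun i j => evec 𝕜 ε j.1 * B i j.2

/-- Row index type of a block Kronecker pencil. -/
abbrev SRow (m ℓ ε η n : ℕ) := (Fin (η+1) × Fin m) ⊕ (Fin ℓ ⊕ (Fin ε × Fin n))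

/-- Column index type of a block Kronecker pencil. -/
abbrev SCol (m ℓ ε η n : ℕ) := (Fin (ε+1) × Fin n) ⊕ (Fin ℓ ⊕ (Fin η × Fin m))

/-- The block Kronecker pencil
`S(λ) = [[M(λ), K̂₂ᵀC, K₂ᵀ(λ)], [BK̂₁, A-λI, 0], [K₁(λ), 0, 0]]`
represented as a pair `(Sa, Sb)` with `S(λ) = Sa - λ Sb`. -/
def blockKron (m n ℓ ε η : ℕ) (A : Matrix (Fin ℓ) (Fin ℓ) 𝕜) (B : Matrix (Fin ℓ) (Fin n) 𝕜)
    (C : Matrix (Fin m) (Fin ℓ) 𝕜)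
    (M : Matrix (Fin (η+1) × Fin m) (Fin (ε+1) × Fin n) 𝕜 ×
         Matrix (Fin (η+1) × Fin m) (Fin (ε+1) × Fin n) 𝕜) :
    Matrix (SRow m ℓ ε η n) (SCol m ℓ ε η n) 𝕜 × Matrix (SRow m ℓ ε η n) (SCol m ℓ ε η n) 𝕜 :=
  (blocks3 M.1 (colUnit η C) ((Ek 𝕜 η)ᵀ ⊗ₖ (1 : Matrix (Fin m) (Fin m) 𝕜))
      (rowUnit ε B) A 0
      (Ek 𝕜 ε ⊗ₖ (1 : Matrix (Fin n) (Fin n) 𝕜)) 0 0,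
   blocks3 M.2 0 ((Fk 𝕜 η)ᵀ ⊗ₖ (1 : Matrix (Fin m) (Fin m) 𝕜))
      0 1 0
      (Fk 𝕜 ε ⊗ₖ (1 : Matrix (Fin n) (Fin n) 𝕜)) 0 0)

/-- Row index type of the matrix `T`. -/
abbrev TRow (m ℓ ε η n : ℕ) :=
  (((Fin η × Fin m) × Fin ℓ) ⊕ ((Fin η × Fin m) × Fin ℓ)) ⊕
  (((Fin ℓ × (Fin ε × Fin n)) ⊕ (Fin ℓ × (Fin ε × Fin n))) ⊕
   (((Fin η × Fin m) × (Fin ε × Fin n)) ⊕ ((Fin η × Fin m) × (Fin ε × Fin n))))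

/-- Column index type of the matrix `T`. -/
abbrev TCol (m ℓ ε η n : ℕ) :=
  (((Fin (η+1) × Fin m) × Fin ℓ) ⊕ ((Fin η × Fin m) × Fin ℓ)) ⊕
  (((Fin ℓ × (Fin ε × Fin n)) ⊕ (Fin ℓ × (Fin (ε+1) × Fin n))) ⊕
   (((Fin (η+1) × Fin m) × (Fin ε × Fin n)) ⊕ ((Fin η × Fin m) × (Fin (ε+1) × Fin n))))

/-- The 6×6 block matrix `T`. -/
def Tmat (m n ℓ ε η : ℕ) (A : Matrix (Fin ℓ) (Fin ℓ) 𝕜) (B : Matrix (Fin ℓ) (Fin n) 𝕜)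
    (C : Matrix (Fin m) (Fin ℓ) 𝕜) : Matrix (TRow m ℓ ε η n) (TCol m ℓ ε η n) 𝕜 :=
  Matrix.fromRows
    (Matrix.fromCols
      (Matrix.fromBlocks
        ((Ek 𝕜 η ⊗ₖ (1 : Matrix (Fin m) (Fin m) 𝕜)) ⊗ₖ (1 : Matrix (Fin ℓ) (Fin ℓ) 𝕜))
        ((1 : Matrix (Fin η × Fin m) (Fin η × Fin m) 𝕜) ⊗ₖ A)
        ((Fk 𝕜 η ⊗ₖ (1 : Matrix (Fin m) (Fin m) 𝕜)) ⊗ₖ (1 : Matrix (Fin ℓ) (Fin ℓ) 𝕜))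
        ((1 : Matrix (Fin η × Fin m) (Fin η × Fin m) 𝕜) ⊗ₖ (1 : Matrix (Fin ℓ) (Fin ℓ) 𝕜)))
      (Matrix.fromCols 0
        (Matrix.fromBlocks 0
          ((1 : Matrix (Fin η × Fin m) (Fin η × Fin m) 𝕜) ⊗ₖ (rowUnit ε B))
          0 0)))
    (Matrix.fromRows
      (Matrix.fromCols 0
        (Matrix.fromCols
          (Matrix.fromBlocks
            (Aᵀ ⊗ₖ (1 : Matrix (Fin ε × Fin n) (Fin ε × Fin n) 𝕜))
            ((1 : Matrix (Fin ℓ) (Fin ℓ) 𝕜) ⊗ₖ (Ek 𝕜 ε ⊗ₖ (1 : Matrix (Fin n) (Fin n) 𝕜)))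
            ((1 : Matrix (Fin ℓ) (Fin ℓ) 𝕜) ⊗ₖ (1 : Matrix (Fin ε × Fin n) (Fin ε × Fin n) 𝕜))
            ((1 : Matrix (Fin ℓ) (Fin ℓ) 𝕜) ⊗ₖ (Fk 𝕜 ε ⊗ₖ (1 : Matrix (Fin n) (Fin n) 𝕜))))
          (Matrix.fromBlocks
            (Matrix.of fun (i : Fin ℓ × (Fin ε × Fin n))
                (j : (Fin (η+1) × Fin m) × (Fin ε × Fin n)) =>
              evec 𝕜 η j.1.1 * C j.1.2 i.1 * (if i.2 = j.2 then 1 else 0))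
            0 0 0)))
      (Matrix.fromCols 0
        (Matrix.fromCols 0
          (Matrix.fromBlocks
            ((Ek 𝕜 η ⊗ₖ (1 : Matrix (Fin m) (Fin m) 𝕜)) ⊗ₖ
              (1 : Matrix (Fin ε × Fin n) (Fin ε × Fin n) 𝕜))
            ((1 : Matrix (Fin η × Fin m) (Fin η × Fin m) 𝕜) ⊗ₖ
              (Ek 𝕜 ε ⊗ₖ (1 : Matrix (Fin n) (Fin n) 𝕜)))
            ((Fk 𝕜 η ⊗ₖ (1 : Matrix (Fin m) (Fin m) 𝕜)) ⊗ₖ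
              (1 : Matrix (Fin ε × Fin n) (Fin ε × Fin n) 𝕜))
            ((1 : Matrix (Fin η × Fin m) (Fin η × Fin m) 𝕜) ⊗ₖ
              (Fk 𝕜 ε ⊗ₖ (1 : Matrix (Fin n) (Fin n) 𝕜)))))))

/-- The 6×6 block matrix `ΔT` built from the blocks of the perturbation pencil. -/
def DeltaT (m n ℓ ε η : ℕ)
    (Δ12a Δ12b : Matrix (Fin (η+1) × Fin m) (Fin ℓ) 𝕜)
    (Δ13a Δ13b : Matrix (Fin (η+1) × Fin m) (Fin η × Fin m) 𝕜)
    (Δ21a Δ21b : Matrix (Fin ℓ) (Fin (ε+1) × Fin n) 𝕜)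
    (Δ22a Δ22b : Matrix (Fin ℓ) (Fin ℓ) 𝕜)
    (Δ23a Δ23b : Matrix (Fin ℓ) (Fin η × Fin m) 𝕜)
    (Δ31a Δ31b : Matrix (Fin ε × Fin n) (Fin (ε+1) × Fin n) 𝕜)
    (Δ32a Δ32b : Matrix (Fin ε × Fin n) (Fin ℓ) 𝕜) :
    Matrix (TRow m ℓ ε η n) (TCol m ℓ ε η n) 𝕜 :=
  Matrix.fromRows
    (Matrix.fromCols
      (Matrix.fromBlocks
        (Δ13aᵀ ⊗ₖ (1 : Matrix (Fin ℓ) (Fin ℓ) 𝕜))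
        ((1 : Matrix (Fin η × Fin m) (Fin η × Fin m) 𝕜) ⊗ₖ Δ22a)
        (Δ13bᵀ ⊗ₖ (1 : Matrix (Fin ℓ) (Fin ℓ) 𝕜))
        ((1 : Matrix (Fin η × Fin m) (Fin η × Fin m) 𝕜) ⊗ₖ Δ22b))
      (Matrix.fromCols 0
        (Matrix.fromBlocks 0 ((1 : Matrix (Fin η × Fin m) (Fin η × Fin m) 𝕜) ⊗ₖ Δ21a)
          0 ((1 : Matrix (Fin η × Fin m) (Fin η × Fin m) 𝕜) ⊗ₖ Δ21b))))
    (Matrix.fromRows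
      (Matrix.fromCols 0
        (Matrix.fromCols
          (Matrix.fromBlocks
            (Δ22aᵀ ⊗ₖ (1 : Matrix (Fin ε × Fin n) (Fin ε × Fin n) 𝕜))
            ((1 : Matrix (Fin ℓ) (Fin ℓ) 𝕜) ⊗ₖ Δ31a)
            (Δ22bᵀ ⊗ₖ (1 : Matrix (Fin ε × Fin n) (Fin ε × Fin n) 𝕜))
            ((1 : Matrix (Fin ℓ) (Fin ℓ) 𝕜) ⊗ₖ Δ31b))
          (Matrix.fromBlocks
            (Δ12aᵀ ⊗ₖ (1 : Matrix (Fin ε × Fin n) (Fin ε × Fin n) 𝕜)) 0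
            (Δ12bᵀ ⊗ₖ (1 : Matrix (Fin ε × Fin n) (Fin ε × Fin n) 𝕜)) 0)))
      (Matrix.fromCols
        (Matrix.fromBlocks 0 ((1 : Matrix (Fin η × Fin m) (Fin η × Fin m) 𝕜) ⊗ₖ Δ32a)
          0 ((1 : Matrix (Fin η × Fin m) (Fin η × Fin m) 𝕜) ⊗ₖ Δ32b))
        (Matrix.fromCols
          (Matrix.fromBlocks
            (Δ23aᵀ ⊗ₖ (1 : Matrix (Fin ε × Fin n) (Fin ε × Fin n) 𝕜)) 0
            (Δ23bᵀ ⊗ₖ (1 : Matrix (Fin ε × Fin n) (Fin ε × Fin n) 𝕜)) 0)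
          (Matrix.fromBlocks
            (Δ13aᵀ ⊗ₖ (1 : Matrix (Fin ε × Fin n) (Fin ε × Fin n) 𝕜))
            ((1 : Matrix (Fin η × Fin m) (Fin η × Fin m) 𝕜) ⊗ₖ Δ31a)
            (Δ13bᵀ ⊗ₖ (1 : Matrix (Fin ε × Fin n) (Fin ε × Fin n) 𝕜))
            ((1 : Matrix (Fin η × Fin m) (Fin η × Fin m) 𝕜) ⊗ₖ Δ31b)))))

/-- `(Λ_k(x) ⊗ I_m)` where `Λ_k(x) = (x^k, …, x, 1)ᵀ`. -/
def LamI (𝕜 : Type*) [RCLike 𝕜] (k m : ℕ) (x : 𝕜) :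
    Matrix (Fin (k+1) × Fin m) (Fin m) 𝕜 :=
  Matrix.of fun i j => if i.2 = j then x ^ (k - (i.1 : ℕ)) else 0

/-- `(A, B)` is controllable if the controllability matrix `[B, AB, …, A^{ℓ-1}B]`
has full rank `ℓ`. -/
def Controllable {ℓ n : ℕ} (A : Matrix (Fin ℓ) (Fin ℓ) 𝕜)
    (B : Matrix (Fin ℓ) (Fin n) 𝕜) : Prop :=
  (Matrix.of fun (i : Fin ℓ) (p : Fin ℓ × Fin n) => (A ^ (p.1 : ℕ) * B) i p.2).rank = ℓ

/-- `(A, C)` is observable if `(Aᵀ, Cᵀ)` is controllable. -/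
def Observable {ℓ m : ℕ} (A : Matrix (Fin ℓ) (Fin ℓ) 𝕜)
    (C : Matrix (Fin m) (Fin ℓ) 𝕜) : Prop :=
  Controllable Aᵀ Cᵀ

end

/-!
Every block of `S(λ)` has spectral norm at most `1`: the blocks `M`, `A`, `B K̂₁`, `K̂₂ᵀ C` because
their Frobenius norms are, and `I`, `E_k ⊗ I`, `F_k ⊗ I` and their transposes because they are row
or column selections of identity matrices. As the squared spectral norm of a block matrix is at
most the sum of the squared spectral norms of its blocks, `‖S(λ)‖₂ ≤ 5`; with `‖A‖₂, ‖B‖₂, ‖C‖₂ ≤ 1`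
the factors `1 + fᵢ ‖S(λ)‖₂` are then `O(t²)`, `O(t)`, `O(t)`. On the other hand
`‖S(λ)‖_F² ≤ 4 + ℓ + 2(ηm + εn) = O(ℓ t (m + n))` while `‖R(λ)‖_F² ≥ ℓ`, so that
`‖S(λ)‖_F / ‖R(λ)‖_F = O(√(t (m + n)))`. Finally `√(2 min(ε + 1, η + 1))` is `O(√t)`, and it is
`√2` when `ε = 0` or `η = 0`.
-/

namespace BlockKronecker

open Set

variable {𝕜 : Type*} [RCLike 𝕜]

section MatrixNorms

variable {p q r s : Type*} [Fintype p] [Fintype q] [Fintype r] [Fintype s]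

lemma frobNorm_nonneg (M : Matrix p q 𝕜) : 0 ≤ frobNorm M := Real.sqrt_nonneg _

lemma specNorm_nonneg [DecidableEq p] (M : Matrix p q 𝕜) : 0 ≤ specNorm M := Real.sqrt_nonneg _

lemma pFrob_nonneg (P : Matrix p q 𝕜 × Matrix p q 𝕜) : 0 ≤ pFrob P := Real.sqrt_nonneg _

lemma pSpec_nonneg [DecidableEq p] (P : Matrix p q 𝕜 × Matrix p q 𝕜) : 0 ≤ pSpec P :=
  Real.sqrt_nonneg _

lemma vecNorm_sq (x : q → 𝕜) : vecNorm x ^ 2 = ∑ i, ‖x i‖ ^ 2 :=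
  Real.sq_sqrt (Finset.sum_nonneg fun _ _ => sq_nonneg _)

lemma frobNorm_sq (M : Matrix p q 𝕜) : frobNorm M ^ 2 = ∑ i, ∑ j, ‖M i j‖ ^ 2 :=
  Real.sq_sqrt (Finset.sum_nonneg fun _ _ => Finset.sum_nonneg fun _ _ => sq_nonneg _)

lemma vecNorm_eq_norm_toLp (x : q → 𝕜) : vecNorm x = ‖WithLp.toLp 2 x‖ := by
  simp [vecNorm, EuclideanSpace.norm_eq]

lemma vecNorm_sum_elim_sq (x : p → 𝕜) (y : q → 𝕜) :
    vecNorm (Sum.elim x y) ^ 2 = vecNorm x ^ 2 + vecNorm y ^ 2 := by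
  simp [vecNorm_sq, Fintype.sum_sum_type]

def OpNormSqLE (M : Matrix p q 𝕜) (c : ℝ) : Prop :=
  ∀ x, vecNorm (M *ᵥ x) ^ 2 ≤ c * vecNorm x ^ 2

namespace OpNormSqLE

lemma mono {M : Matrix p q 𝕜} {c c' : ℝ} (h : OpNormSqLE M c) (hc : c ≤ c') :
    OpNormSqLE M c' := fun x =>
  (h x).trans (mul_le_mul_of_nonneg_right hc (sq_nonneg _))

lemma zero {c : ℝ} (hc : 0 ≤ c) : OpNormSqLE (0 : Matrix p q 𝕜) c := fun x => by
  simp only [zero_mulVec, vecNorm_sq, Pi.zero_apply, norm_zero, ne_eq, OfNat.ofNat_ne_zero,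
    not_false_eq_true, zero_pow, Finset.sum_const_zero]
  positivity

lemma one [DecidableEq p] : OpNormSqLE (1 : Matrix p p 𝕜) 1 := fun x => by
  rw [one_mulVec, one_mul]

lemma frobNorm_sq (M : Matrix p q 𝕜) : OpNormSqLE M (frobNorm M ^ 2) := by
  intro x
  rw [vecNorm_sq, vecNorm_sq, BlockKronecker.frobNorm_sq, Finset.sum_mul]
  refine Finset.sum_le_sum fun i _ => ?_
  calc ‖(M *ᵥ x) i‖ ^ 2 ≤ (∑ j, ‖M i j‖ * ‖x j‖) ^ 2 := by
        gcongr
        exact (norm_sum_le _ _).trans_eq (by simp only [norm_mul])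
    _ ≤ (∑ j, ‖M i j‖ ^ 2) * ∑ j, ‖x j‖ ^ 2 := Finset.sum_mul_sq_le_sq_mul_sq _ _ _

lemma of_frobNorm_le_one {M : Matrix p q 𝕜} (h : frobNorm M ≤ 1) : OpNormSqLE M 1 :=
  (frobNorm_sq M).mono (pow_le_one₀ (frobNorm_nonneg M) h)

lemma fromRows {M : Matrix p r 𝕜} {N : Matrix q r 𝕜} {a b : ℝ}
    (hM : OpNormSqLE M a) (hN : OpNormSqLE N b) : OpNormSqLE (Matrix.fromRows M N) (a + b) := by
  intro x
  rw [fromRows_mulVec, vecNorm_sum_elim_sq, add_mul]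
  exact add_le_add (hM x) (hN x)

lemma fromCols {M : Matrix p q 𝕜} {N : Matrix p r 𝕜} {a b : ℝ} (ha : 0 ≤ a) (hb : 0 ≤ b)
    (hM : OpNormSqLE M a) (hN : OpNormSqLE N b) :
    OpNormSqLE (Matrix.fromCols M N) (a + b) := by
  intro x
  rw [← Sum.elim_comp_inl_inr x, fromCols_mulVec_sumElim, vecNorm_sum_elim_sq]
  set u := vecNorm (x ∘ Sum.inl)
  set v := vecNorm (x ∘ Sum.inr)
  set y := M *ᵥ (x ∘ Sum.inl)
  set z := N *ᵥ (x ∘ Sum.inr)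
  have hu : vecNorm y ^ 2 ≤ a * u ^ 2 := hM _
  have hv : vecNorm z ^ 2 ≤ b * v ^ 2 := hN _
  have hy : 0 ≤ vecNorm y := Real.sqrt_nonneg _
  have hz : 0 ≤ vecNorm z := Real.sqrt_nonneg _
  have hyz : vecNorm (y + z) ≤ vecNorm y + vecNorm z := by
    simpa only [vecNorm_eq_norm_toLp, WithLp.toLp_add] using norm_add_le _ _
  -- Cauchy–Schwarz: `(2 ‖y‖ ‖z‖)² ≤ 4 a u² b v² ≤ (a v² + b u²)²`
  have hcross : 2 * (vecNorm y * vecNorm z) ≤ a * v ^ 2 + b * u ^ 2 := by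
    refine (pow_le_pow_iff_left₀ (by positivity) (by positivity) two_ne_zero).1 ?_
    have := mul_le_mul hu hv (sq_nonneg _) (by positivity)
    nlinarith [sq_nonneg (a * v ^ 2 - b * u ^ 2)]
  have h0 : 0 ≤ vecNorm (y + z) := Real.sqrt_nonneg _
  nlinarith

lemma fromBlocks {M₁₁ : Matrix p r 𝕜} {M₁₂ : Matrix p s 𝕜} {M₂₁ : Matrix q r 𝕜}
    {M₂₂ : Matrix q s 𝕜} {a b c d : ℝ} (ha : 0 ≤ a) (hb : 0 ≤ b) (hc : 0 ≤ c) (hd : 0 ≤ d)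
    (h₁₁ : OpNormSqLE M₁₁ a) (h₁₂ : OpNormSqLE M₁₂ b) (h₂₁ : OpNormSqLE M₂₁ c)
    (h₂₂ : OpNormSqLE M₂₂ d) :
    OpNormSqLE (Matrix.fromBlocks M₁₁ M₁₂ M₂₁ M₂₂) (a + b + (c + d)) := by
  rw [← fromRows_fromCols_eq_fromBlocks]
  exact (h₁₁.fromCols ha hb h₁₂).fromRows (h₂₁.fromCols hc hd h₂₂)

lemma blocks3 {R₁ R₂ R₃ C₁ C₂ C₃ : Type*} [Fintype R₁] [Fintype R₂] [Fintype R₃]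
    [Fintype C₁] [Fintype C₂] [Fintype C₃]
    {M₁₁ : Matrix R₁ C₁ 𝕜} {M₁₂ : Matrix R₁ C₂ 𝕜} {M₁₃ : Matrix R₁ C₃ 𝕜}
    {M₂₁ : Matrix R₂ C₁ 𝕜} {M₂₂ : Matrix R₂ C₂ 𝕜} {M₂₃ : Matrix R₂ C₃ 𝕜}
    {M₃₁ : Matrix R₃ C₁ 𝕜} {M₃₂ : Matrix R₃ C₂ 𝕜} {M₃₃ : Matrix R₃ C₃ 𝕜} {c : ℝ} (hc : 0 ≤ c)
    (h₁₁ : OpNormSqLE M₁₁ c) (h₁₂ : OpNormSqLE M₁₂ c) (h₁₃ : OpNormSqLE M₁₃ c)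
    (h₂₁ : OpNormSqLE M₂₁ c) (h₂₂ : OpNormSqLE M₂₂ c) (h₂₃ : OpNormSqLE M₂₃ c)
    (h₃₁ : OpNormSqLE M₃₁ c) (h₃₂ : OpNormSqLE M₃₂ c) (h₃₃ : OpNormSqLE M₃₃ c) :
    OpNormSqLE (blocks3 M₁₁ M₁₂ M₁₃ M₂₁ M₂₂ M₂₃ M₃₁ M₃₂ M₃₃) (9 * c) :=
  (h₁₁.fromBlocks (by positivity) (by positivity) (by positivity) (by positivity)
    (h₁₂.fromCols hc hc h₁₃) (h₂₁.fromRows h₃₁)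
    (h₂₂.fromBlocks hc hc hc hc h₂₃ h₃₂ h₃₃)).mono (by linarith)

end OpNormSqLE

lemma re_star_dotProduct_self (x : q → 𝕜) : RCLike.re (star x ⬝ᵥ x) = vecNorm x ^ 2 := by
  rw [vecNorm_sq, dotProduct, map_sum]
  refine Finset.sum_congr rfl fun i _ => ?_
  rw [Pi.star_apply, RCLike.star_def, RCLike.conj_mul, ← RCLike.ofReal_pow, RCLike.ofReal_re]

/-- An eigenvector `v` of `M Mᴴ` for the eigenvalue `μ` gives `‖M (Mᴴ v)‖ = μ` and
`‖Mᴴ v‖² = μ`, so `μ² ≤ c μ`. -/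
lemma specNorm_le_of_opNormSqLE [DecidableEq p] {M : Matrix p q 𝕜} {c : ℝ} (hc : 0 ≤ c)
    (h : OpNormSqLE M (c ^ 2)) : specNorm M ≤ c := by
  refine (Real.sqrt_le_sqrt ?_).trans_eq (Real.sqrt_sq hc)
  cases isEmpty_or_nonempty p
  · rw [Real.iSup_of_isEmpty]
    positivity
  refine ciSup_le fun i => ?_
  set hH := isHermitian_mul_conjTranspose_self M
  set μ := hH.eigenvalues i
  set v : p → 𝕜 := ⇑(hH.eigenvectorBasis i)
  have heig : (M * Mᴴ) *ᵥ v = μ • v := hH.mulVec_eigenvectorBasis i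
  have hμ : 0 ≤ μ := eigenvalues_self_mul_conjTranspose_nonneg M i
  have hv : vecNorm v = 1 := by
    rw [vecNorm_eq_norm_toLp, WithLp.toLp_ofLp]
    exact hH.eigenvectorBasis.orthonormal.1 i
  have hMv : vecNorm (M *ᵥ (Mᴴ *ᵥ v)) = μ := by
    rw [mulVec_mulVec, heig, vecNorm_eq_norm_toLp, WithLp.toLp_smul, norm_smul,
      ← vecNorm_eq_norm_toLp, hv, mul_one, Real.norm_of_nonneg hμ]
  have hMHv : vecNorm (Mᴴ *ᵥ v) ^ 2 = μ := by
    rw [← re_star_dotProduct_self, star_mulVec, conjTranspose_conjTranspose,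
      ← dotProduct_mulVec, mulVec_mulVec, heig, RCLike.real_smul_eq_coe_smul (K := 𝕜),
      dotProduct_smul, smul_eq_mul, RCLike.re_ofReal_mul, re_star_dotProduct_self, hv]
    simp
  have := h (Mᴴ *ᵥ v)
  rw [hMv, hMHv] at this
  nlinarith [sq_nonneg c]

lemma specNorm_le_frobNorm [DecidableEq p] (M : Matrix p q 𝕜) : specNorm M ≤ frobNorm M :=
  specNorm_le_of_opNormSqLE (frobNorm_nonneg M) (OpNormSqLE.frobNorm_sq M)

lemma specNorm_mem_Icc_of_frobNorm_le_one [DecidableEq p] {M : Matrix p q 𝕜}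
    (h : frobNorm M ≤ 1) : specNorm M ∈ Icc 0 1 :=
  ⟨specNorm_nonneg M, (specNorm_le_frobNorm M).trans h⟩

lemma frobNorm_zero : frobNorm (0 : Matrix p q 𝕜) = 0 := by
  simp [frobNorm]

lemma pFrob_sq (P : Matrix p q 𝕜 × Matrix p q 𝕜) :
    pFrob P ^ 2 = frobNorm P.1 ^ 2 + frobNorm P.2 ^ 2 :=
  Real.sq_sqrt (by positivity)

lemma frobNorm_fst_le_pFrob (P : Matrix p q 𝕜 × Matrix p q 𝕜) : frobNorm P.1 ≤ pFrob P :=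
  Real.le_sqrt_of_sq_le (le_add_of_nonneg_right (sq_nonneg _))

lemma frobNorm_snd_le_pFrob (P : Matrix p q 𝕜 × Matrix p q 𝕜) : frobNorm P.2 ≤ pFrob P :=
  Real.le_sqrt_of_sq_le (le_add_of_nonneg_left (sq_nonneg _))

lemma frobNorm_transpose (M : Matrix p q 𝕜) : frobNorm Mᵀ = frobNorm M := by
  rw [frobNorm, frobNorm, Finset.sum_comm]
  rfl

section Selection

variable [DecidableEq q] {g : p → q}

lemma OpNormSqLE.one_submatrix_left (hg : Function.Injective g) :
    OpNormSqLE ((1 : Matrix q q 𝕜).submatrix g id) 1 := by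
  intro x
  have hsel : (1 : Matrix q q 𝕜).submatrix g id *ᵥ x = x ∘ g := by
    ext i
    simp [mulVec, dotProduct, one_apply]
  rw [hsel, vecNorm_sq, vecNorm_sq, one_mul]
  simp only [Function.comp_apply]
  rw [← Finset.sum_image (f := fun j => ‖x j‖ ^ 2) hg.injOn]
  exact Finset.sum_le_univ_sum_of_nonneg fun _ => sq_nonneg _

lemma OpNormSqLE.one_submatrix_right (hg : Function.Injective g) :
    OpNormSqLE ((1 : Matrix q q 𝕜).submatrix id g) 1 := by
  intro x
  have hval : ∀ j, ((1 : Matrix q q 𝕜).submatrix id g *ᵥ x) (g j) = x j := fun j => by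
    simp only [mulVec, dotProduct, submatrix_apply, id, one_apply, ite_mul, one_mul, zero_mul]
    rw [Finset.sum_eq_single j (fun k _ hk => if_neg (hg.ne hk.symm)) (by simp), if_pos rfl]
  have hzero : ∀ i ∉ Finset.univ.image g, ((1 : Matrix q q 𝕜).submatrix id g *ᵥ x) i = 0 :=
    fun i hi => by
      refine Finset.sum_eq_zero fun j _ => ?_
      simp only [submatrix_apply, id, one_apply]
      rw [if_neg (by rintro rfl; exact hi (Finset.mem_image_of_mem g (Finset.mem_univ j))),
        zero_mul]
  rw [vecNorm_sq, vecNorm_sq, one_mul,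
    ← Finset.sum_subset (Finset.subset_univ _) fun i _ hi => by rw [hzero i hi, norm_zero,
      zero_pow two_ne_zero],
    Finset.sum_image hg.injOn]
  simp only [hval, le_refl]

lemma frobNorm_one_submatrix_sq (g : p → q) :
    frobNorm ((1 : Matrix q q 𝕜).submatrix g id) ^ 2 = Fintype.card p := by
  simp [frobNorm_sq, one_apply, apply_ite (fun z : 𝕜 => ‖z‖ ^ 2)]

end Selection

lemma Ek_eq_submatrix (k : ℕ) :
    Ek 𝕜 k = (1 : Matrix (Fin (k + 1)) (Fin (k + 1)) 𝕜).submatrix Fin.castSucc id := by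
  ext i j
  simp [Ek, one_apply, Fin.ext_iff, eq_comm]

lemma Fk_eq_submatrix (k : ℕ) :
    Fk 𝕜 k = (1 : Matrix (Fin (k + 1)) (Fin (k + 1)) 𝕜).submatrix Fin.succ id := by
  ext i j
  simp [Fk, one_apply, Fin.ext_iff, eq_comm]

lemma one_submatrix_kronecker_one {k k' n : Type*} [DecidableEq k'] [DecidableEq n]
    (g : k → k') :
    (1 : Matrix k' k' 𝕜).submatrix g id ⊗ₖ (1 : Matrix n n 𝕜) =
      (1 : Matrix (k' × n) (k' × n) 𝕜).submatrix (Prod.map g id) id := by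
  rw [kroneckerMap_submatrix_left, ← one_kronecker_one, Prod.map_id]

lemma transpose_kronecker_one {k k' n : Type*} [DecidableEq n] (M : Matrix k k' 𝕜) :
    Mᵀ ⊗ₖ (1 : Matrix n n 𝕜) = (M ⊗ₖ (1 : Matrix n n 𝕜))ᵀ := by
  rw [← kroneckerMap_transpose, transpose_one]


end MatrixNorms

section Pencil

lemma Ek_kronecker_one {n : Type*} [DecidableEq n] (k : ℕ) :
    Ek 𝕜 k ⊗ₖ (1 : Matrix n n 𝕜) =
      (1 : Matrix (Fin (k + 1) × n) _ 𝕜).submatrix (Prod.map Fin.castSucc id) id := by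
  rw [Ek_eq_submatrix, one_submatrix_kronecker_one]

lemma Fk_kronecker_one {n : Type*} [DecidableEq n] (k : ℕ) :
    Fk 𝕜 k ⊗ₖ (1 : Matrix n n 𝕜) =
      (1 : Matrix (Fin (k + 1) × n) _ 𝕜).submatrix (Prod.map Fin.succ id) id := by
  rw [Fk_eq_submatrix, one_submatrix_kronecker_one]

lemma evec_eq_ite (k : ℕ) (i : Fin (k + 1)) : evec 𝕜 k i = if i = Fin.last k then 1 else 0 := by
  simp [evec, Fin.ext_iff]

lemma frobNorm_colUnit {m ℓ : ℕ} (η : ℕ) (C : Matrix (Fin m) (Fin ℓ) 𝕜) :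
    frobNorm (colUnit η C) = frobNorm C := by
  simp [frobNorm, colUnit, evec_eq_ite, Fintype.sum_prod_type, apply_ite (fun z : 𝕜 => ‖z‖)]

lemma frobNorm_rowUnit {n ℓ : ℕ} (ε : ℕ) (B : Matrix (Fin ℓ) (Fin n) 𝕜) :
    frobNorm (rowUnit ε B) = frobNorm B := by
  simp [frobNorm, rowUnit, evec_eq_ite, Fintype.sum_prod_type, apply_ite (fun z : 𝕜 => ‖z‖)]

lemma frobNorm_one_sq (ℓ : ℕ) : frobNorm (1 : Matrix (Fin ℓ) (Fin ℓ) 𝕜) ^ 2 = ℓ := by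
  simpa using frobNorm_one_submatrix_sq (𝕜 := 𝕜) (id : Fin ℓ → Fin ℓ)

lemma frobNorm_blocks3_sq {R₁ R₂ R₃ C₁ C₂ C₃ : Type*} [Fintype R₁] [Fintype R₂] [Fintype R₃]
    [Fintype C₁] [Fintype C₂] [Fintype C₃]
    (M₁₁ : Matrix R₁ C₁ 𝕜) (M₁₂ : Matrix R₁ C₂ 𝕜) (M₁₃ : Matrix R₁ C₃ 𝕜)
    (M₂₁ : Matrix R₂ C₁ 𝕜) (M₂₂ : Matrix R₂ C₂ 𝕜) (M₂₃ : Matrix R₂ C₃ 𝕜)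
    (M₃₁ : Matrix R₃ C₁ 𝕜) (M₃₂ : Matrix R₃ C₂ 𝕜) (M₃₃ : Matrix R₃ C₃ 𝕜) :
    frobNorm (blocks3 M₁₁ M₁₂ M₁₃ M₂₁ M₂₂ M₂₃ M₃₁ M₃₂ M₃₃) ^ 2 =
      frobNorm M₁₁ ^ 2 + frobNorm M₁₂ ^ 2 + frobNorm M₁₃ ^ 2 +
      frobNorm M₂₁ ^ 2 + frobNorm M₂₂ ^ 2 + frobNorm M₂₃ ^ 2 +
      frobNorm M₃₁ ^ 2 + frobNorm M₃₂ ^ 2 + frobNorm M₃₃ ^ 2 := by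
  simp only [frobNorm_sq, blocks3, Fintype.sum_sum_type, fromBlocks_apply₁₁, fromBlocks_apply₁₂,
    fromBlocks_apply₂₁, fromBlocks_apply₂₂, fromRows_apply_inl, fromRows_apply_inr,
    fromCols_apply_inl, fromCols_apply_inr, Finset.sum_add_distrib]
  ring

variable {m n ℓ ε η : ℕ} {A : Matrix (Fin ℓ) (Fin ℓ) 𝕜}
  {B : Matrix (Fin ℓ) (Fin n) 𝕜} {C : Matrix (Fin m) (Fin ℓ) 𝕜}
  {Ma Mb : Matrix (Fin (η + 1) × Fin m) (Fin (ε + 1) × Fin n) 𝕜}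

lemma OpNormSqLE.blockKron_fst (hA : frobNorm A ≤ 1) (hB : frobNorm B ≤ 1)
    (hC : frobNorm C ≤ 1) (hMa : frobNorm Ma ≤ 1) :
    OpNormSqLE (blockKron m n ℓ ε η A B C (Ma, Mb)).1 (3 ^ 2) := by
  simp only [blockKron, transpose_kronecker_one, Ek_kronecker_one, transpose_submatrix,
    transpose_one]
  exact (blocks3 zero_le_one (.of_frobNorm_le_one hMa)
    (.of_frobNorm_le_one ((frobNorm_colUnit η C).trans_le hC))
    (.one_submatrix_right ((Fin.castSucc_injective η).prodMap Function.injective_id))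
    (.of_frobNorm_le_one ((frobNorm_rowUnit ε B).trans_le hB)) (.of_frobNorm_le_one hA)
    (zero zero_le_one)
    (.one_submatrix_left ((Fin.castSucc_injective ε).prodMap Function.injective_id))
    (zero zero_le_one) (zero zero_le_one)).mono (by norm_num)

lemma OpNormSqLE.blockKron_snd (hMb : frobNorm Mb ≤ 1) :
    OpNormSqLE (blockKron m n ℓ ε η A B C (Ma, Mb)).2 (3 ^ 2) := by
  simp only [blockKron, transpose_kronecker_one, Fk_kronecker_one, transpose_submatrix,
    transpose_one]
  exact (blocks3 zero_le_one (.of_frobNorm_le_one hMb) (zero zero_le_one)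
    (.one_submatrix_right ((Fin.succ_injective η).prodMap Function.injective_id))
    (zero zero_le_one) one (zero zero_le_one)
    (.one_submatrix_left ((Fin.succ_injective ε).prodMap Function.injective_id))
    (zero zero_le_one) (zero zero_le_one)).mono (by norm_num)

lemma pSpec_blockKron_le (hA : frobNorm A ≤ 1) (hB : frobNorm B ≤ 1) (hC : frobNorm C ≤ 1)
    (hM : pFrob (Ma, Mb) ≤ 1) : pSpec (blockKron m n ℓ ε η A B C (Ma, Mb)) ≤ 5 := by
  have h₁ : specNorm (blockKron m n ℓ ε η A B C (Ma, Mb)).1 ≤ 3 :=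
    specNorm_le_of_opNormSqLE (by norm_num)
      (.blockKron_fst hA hB hC ((frobNorm_fst_le_pFrob (Ma, Mb)).trans hM))
  have h₂ : specNorm (blockKron m n ℓ ε η A B C (Ma, Mb)).2 ≤ 3 :=
    specNorm_le_of_opNormSqLE (by norm_num)
      (.blockKron_snd ((frobNorm_snd_le_pFrob (Ma, Mb)).trans hM))
  rw [pSpec, Real.sqrt_le_left (by norm_num)]
  nlinarith [specNorm_nonneg (blockKron m n ℓ ε η A B C (Ma, Mb)).1,
    specNorm_nonneg (blockKron m n ℓ ε η A B C (Ma, Mb)).2]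

lemma pFrob_blockKron_sq_le (hA : frobNorm A ≤ 1) (hB : frobNorm B ≤ 1) (hC : frobNorm C ≤ 1)
    (hM : pFrob (Ma, Mb) ≤ 1) :
    pFrob (blockKron m n ℓ ε η A B C (Ma, Mb)) ^ 2 ≤ 4 + ℓ + 2 * (η * m + ε * n) := by
  have hMab := pFrob_sq (Ma, Mb) ▸ pow_le_one₀ (n := 2) (pFrob_nonneg _) hM
  rw [pFrob_sq]
  simp only [blockKron, transpose_kronecker_one, Ek_kronecker_one, Fk_kronecker_one,
    frobNorm_blocks3_sq, frobNorm_transpose, frobNorm_colUnit, frobNorm_rowUnit,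
    frobNorm_one_submatrix_sq, frobNorm_one_sq, frobNorm_zero, Fintype.card_prod,
    Fintype.card_fin, Nat.cast_mul]
  have hA2 := pow_le_one₀ (n := 2) (frobNorm_nonneg A) hA
  have hB2 := pow_le_one₀ (n := 2) (frobNorm_nonneg B) hB
  have hC2 := pow_le_one₀ (n := 2) (frobNorm_nonneg C) hC
  linarith

end Pencil

section Constants

variable {t : ℝ}

lemma one_add_two_mul_mul_max_one_pow_mem_Icc {a k : ℝ} (j : ℕ) (ha : a ∈ Icc 0 1)
    (hk : k ∈ Icc 0 t) (ht : 1 ≤ t) : 1 + 2 * k * max 1 (a ^ j) ∈ Icc 0 (3 * t) := by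
  rw [max_eq_left (pow_le_one₀ ha.1 ha.2)]
  constructor <;> linarith [hk.1, hk.2]

lemma add_div_two_mul_sqrt_two_mem_Icc {x y : ℝ} (hx : x ∈ Icc 0 t) (hy : y ∈ Icc 0 t) :
    (x + y) / (2 * √2) ∈ Icc 0 t := by
  have h : 2 ≤ 2 * √2 := by nlinarith [Real.one_lt_sqrt_two]
  refine ⟨div_nonneg (by linarith [hx.1, hy.1]) (by positivity),
    (div_le_div_of_nonneg_left (by linarith [hx.1, hy.1]) two_pos h).trans ?_⟩
  linarith [hx.2, hy.2]

lemma max_max_add_mul_mem_Icc {α β γ b c : ℝ} (hα : α ∈ Icc 0 (3 * t)) (hβ : β ∈ Icc 0 (3 * t))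
    (hγ : γ ∈ Icc 0 t) (hb : b ∈ Icc 0 1) (hc : c ∈ Icc 0 1) (ht : 1 ≤ t) :
    max (max α β) γ + γ * (β * b + α * c) ∈ Icc 0 (9 * t ^ 2) := by
  obtain ⟨hα₀, hα₁⟩ := hα
  obtain ⟨hβ₀, hβ₁⟩ := hβ
  obtain ⟨hγ₀, hγ₁⟩ := hγ
  have hmax : max (max α β) γ ≤ 3 * t := max_le (max_le hα₁ hβ₁) (by linarith)
  have hsum : β * b + α * c ≤ 6 * t := by nlinarith [hb.1, hb.2, hc.1, hc.2]
  have hsum₀ : 0 ≤ β * b + α * c := by nlinarith [hb.1, hc.1]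
  constructor
  · nlinarith [le_max_right (max α β) γ]
  · nlinarith

lemma four_mul_sqrt_two_mul_div_mem_Icc {s : ℝ} (hs : s ∈ Icc 0 (9 * t ^ 2)) :
    4 * √2 * s / (2 - √3) ∈ Icc 0 (216 * t ^ 2) := by
  have h2 := Real.sqrt_two_lt_three_halves
  have h3 : √3 ≤ 7 / 4 := Real.sqrt_le_iff.2 ⟨by norm_num, by norm_num⟩
  have hden : 1 / 4 ≤ 2 - √3 := by linarith
  refine ⟨div_nonneg (mul_nonneg (by positivity) hs.1) (by linarith), ?_⟩
  rw [div_le_iff₀ (by linarith)]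
  nlinarith [hs.1, hs.2, Real.sqrt_nonneg 2]

lemma sqrt_two_mul_four_mul_sub_one_div_mem_Icc (ht : 1 ≤ t) :
    √2 * (4 * t - 1) / 3 ∈ Icc 0 (2 * t) := by
  have h2 := Real.sqrt_two_lt_three_halves
  constructor
  · exact div_nonneg (mul_nonneg (Real.sqrt_nonneg 2) (by linarith)) (by norm_num)
  · rw [div_le_iff₀ (by norm_num)]
    nlinarith [Real.sqrt_nonneg 2]

lemma sqrt_two_mul_mem_Icc {x : ℝ} (hx : x ∈ Icc 0 (3 * t)) : √2 * x ∈ Icc 0 (5 * t) := by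
  have h2 := Real.sqrt_two_lt_three_halves
  constructor
  · exact mul_nonneg (Real.sqrt_nonneg 2) hx.1
  · nlinarith [hx.1, hx.2, Real.sqrt_nonneg 2]

lemma one_add_mul_factors_le {ε η : ℕ} {a b c P α β γ s f₁ f₂ f₃ : ℝ} (ha : a ∈ Icc 0 1)
    (hb : b ∈ Icc 0 1) (hc : c ∈ Icc 0 1) (hP : P ∈ Icc 0 5) (ht : 1 ≤ max (η : ℝ) ε)
    (hα : α = 1 + 2 * (ε : ℝ) * max 1 (a ^ ε)) (hβ : β = 1 + 2 * (η : ℝ) * max 1 (a ^ η))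
    (hγ : γ = ((ε : ℝ) + η) / (2 * √2)) (hs : s = max (max α β) γ + γ * (β * b + α * c))
    (hf₁ : f₁ = 4 * √2 * s / (2 - √3)) (hf₂ : f₂ = √2 * (4 * max (η : ℝ) ε - 1) / 3)
    (hf₃ : f₃ = √2 * (1 + 2 * max (η : ℝ) ε * max 1 (a ^ max η ε))) :
    (1 + f₁ * P) * (1 + f₂ * P) * (1 + f₃ * P) ≤ 309166 * max (η : ℝ) ε ^ 4 := by
  set t := max (η : ℝ) ε
  have hεt : (ε : ℝ) ∈ Icc 0 t := ⟨by positivity, le_max_right _ _⟩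
  have hηt : (η : ℝ) ∈ Icc 0 t := ⟨by positivity, le_max_left _ _⟩
  have hα' := hα ▸ one_add_two_mul_mul_max_one_pow_mem_Icc ε ha hεt ht
  have hβ' := hβ ▸ one_add_two_mul_mul_max_one_pow_mem_Icc η ha hηt ht
  have hγ' := hγ ▸ add_div_two_mul_sqrt_two_mem_Icc hεt hηt
  have hs' := hs ▸ max_max_add_mul_mem_Icc hα' hβ' hγ' hb hc ht
  obtain ⟨h₁, h₁'⟩ := hf₁ ▸ four_mul_sqrt_two_mul_div_mem_Icc hs'
  obtain ⟨h₂, h₂'⟩ := hf₂ ▸ sqrt_two_mul_four_mul_sub_one_div_mem_Icc ht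
  obtain ⟨h₃, h₃'⟩ := hf₃ ▸ sqrt_two_mul_mem_Icc
    (one_add_two_mul_mul_max_one_pow_mem_Icc (max η ε) ha ⟨by linarith, le_rfl⟩ ht)
  obtain ⟨hP₀, hP₁⟩ := hP
  have e₁ : 1 + f₁ * P ≤ 1081 * t ^ 2 := by nlinarith
  have e₂ : 1 + f₂ * P ≤ 11 * t := by nlinarith
  have e₃ : 1 + f₃ * P ≤ 26 * t := by nlinarith
  calc (1 + f₁ * P) * (1 + f₂ * P) * (1 + f₃ * P) ≤ 1081 * t ^ 2 * (11 * t) * (26 * t) := by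
        gcongr
    _ = 309166 * t ^ 4 := by ring

lemma le_three_mul_sqrt_mul_sqrt_of_sq_le {F R : ℝ} {ℓ m n ε η : ℕ} (hF₀ : 0 ≤ F)
    (hF : F ^ 2 ≤ 4 + ℓ + 2 * (η * m + ε * n)) (hR : (ℓ : ℝ) ≤ R) (hℓ : 0 < ℓ) (hm : 0 < m)
    (hn : 0 < n) (hε : (ε : ℝ) ≤ t) (hη : (η : ℝ) ≤ t) (ht : 1 ≤ t) :
    F ≤ 3 * (√t * √(m + n)) * √R := by
  have hℓ' : (1 : ℝ) ≤ ℓ := by exact_mod_cast hℓ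
  have hm' : (1 : ℝ) ≤ m := by exact_mod_cast hm
  have hn' : (1 : ℝ) ≤ n := by exact_mod_cast hn
  have htmn : 2 ≤ t * (m + n) := by nlinarith
  have hF' : F ^ 2 ≤ 9 * (t * (m + n)) * R := by
    have : (η : ℝ) * m + ε * n ≤ t * (m + n) := by nlinarith
    nlinarith
  refine (pow_le_pow_iff_left₀ hF₀ (by positivity) two_ne_zero).1 ?_
  rw [mul_pow, mul_pow, mul_pow, Real.sq_sqrt (by linarith), Real.sq_sqrt (by positivity),
    Real.sq_sqrt (by linarith)]
  linarith

lemma mul_mul_mul_mul_div_sqrt_le {a x y z F R B C : ℝ} (ha : 0 ≤ a) (hF₀ : 0 ≤ F)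
    (hB₀ : 0 ≤ B) (hB : x * y * z ≤ B) (hF : F ≤ C * √R) (hR : 0 < R) :
    a * x * y * z * F / √R ≤ a * (B * C) := by
  rw [div_le_iff₀ (Real.sqrt_pos.2 hR)]
  calc a * x * y * z * F = a * (x * y * z) * F := by ring
    _ ≤ a * B * (C * √R) := by gcongr
    _ = a * (B * C) * √R := by ring

lemma sqrt_two_mul_min_le {x y : ℝ} (hx : x ≤ t) (ht : 1 ≤ t) :
    √(2 * min (x + 1) (y + 1)) ≤ 2 * √t := by
  rw [show 2 * √t = √(4 * t) by rw [Real.sqrt_mul (by norm_num)]; norm_num]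
  exact Real.sqrt_le_sqrt (by linarith [min_le_left (x + 1) (y + 1)])

lemma mul_le_of_le_two_mul_sqrt {a x : ℝ} (ha : a ≤ 2 * √t) (ht : 1 ≤ t) :
    a * (309166 * t ^ 4 * (3 * (√t * √x))) ≤ 10 ^ 7 * t ^ 5 * √x := by
  calc a * (309166 * t ^ 4 * (3 * (√t * √x)))
      ≤ 2 * √t * (309166 * t ^ 4 * (3 * (√t * √x))) := by gcongr
    _ = 1854996 * (√t * √t) * t ^ 4 * √x := by ring
    _ ≤ 10 ^ 7 * t ^ 5 * √x := by
        rw [Real.mul_self_sqrt (by linarith)]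
        nlinarith [Real.sqrt_nonneg x, pow_pos (by linarith : 0 < t) 5]

lemma sqrt_two_mul_le {x : ℝ} (ht : 1 ≤ t) :
    √2 * (309166 * t ^ 4 * (3 * (√t * √x))) ≤ 10 ^ 7 * t ^ ((9 : ℝ) / 2) * √x := by
  have h2 := Real.sqrt_two_lt_three_halves
  rw [show (9 : ℝ) / 2 = (4 : ℕ) + 1 / 2 by norm_num, Real.rpow_add (by linarith),
    Real.rpow_natCast, ← Real.sqrt_eq_rpow]
  calc √2 * (309166 * t ^ 4 * (3 * (√t * √x))) = √2 * 927498 * (t ^ 4 * √t) * √x := by ring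
    _ ≤ 10 ^ 7 * (t ^ 4 * √t) * √x := by gcongr; linarith

end Constants

end BlockKronecker

open BlockKronecker

/-- Corollary 4.17. Under the scaling conditions, `K_{S,R}` is bounded by
`g·t⁵·√(m+n)` (resp. `g·t^{9/2}·√(m+n)`), for a universal constant `g > 0`. -/
theorem statement18 :
    ∃ g : ℝ, 0 < g ∧
      ∀ (𝕜 : Type) [inst : RCLike 𝕜], ∀ (m n ℓ ε η : ℕ),
        0 < m → 0 < n → 0 < ℓ → 1 ≤ max η ε →
        ∀ (A : Matrix (Fin ℓ) (Fin ℓ) 𝕜) (B : Matrix (Fin ℓ) (Fin n) 𝕜)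
          (C : Matrix (Fin m) (Fin ℓ) 𝕜)
          (D : Fin (ε + η + 2) → Matrix (Fin m) (Fin n) 𝕜)
          (Ma Mb : Matrix (Fin (η+1) × Fin m) (Fin (ε+1) × Fin n) 𝕜),
          (∀ x : 𝕜, (LamI 𝕜 η m x)ᵀ * (Ma - x • Mb) * (LamI 𝕜 ε n x) =
            ∑ i, x ^ i.val • D i) →
          max (max (frobNorm A) (frobNorm B))
            (max (frobNorm C) (Real.sqrt (∑ i, frobNorm (D i) ^ 2))) ≤ 1 →
          pFrob (Ma, Mb) ≤ 1 →
          ∀ (α β γ s f₁ f₂ f₃ K : ℝ),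
            α = 1 + 2 * (ε : ℝ) * max 1 (specNorm A ^ ε) →
            β = 1 + 2 * (η : ℝ) * max 1 (specNorm A ^ η) →
            γ = ((ε : ℝ) + (η : ℝ)) / (2 * Real.sqrt 2) →
            s = max (max α β) γ + γ * (β * specNorm B + α * specNorm C) →
            f₁ = 4 * Real.sqrt 2 * s / (2 - Real.sqrt 3) →
            f₂ = Real.sqrt 2 * (4 * (max η ε : ℝ) - 1) / 3 →
            f₃ = Real.sqrt 2 * (1 + 2 * (max η ε : ℝ) * max 1 (specNorm A ^ (max η ε))) →
            K = Real.sqrt (2 * (min (ε + 1) (η + 1) : ℝ)) *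
                (1 + f₁ * pSpec (blockKron m n ℓ ε η A B C (Ma, Mb))) *
                (1 + f₂ * pSpec (blockKron m n ℓ ε η A B C (Ma, Mb))) *
                (1 + f₃ * pSpec (blockKron m n ℓ ε η A B C (Ma, Mb))) *
                pFrob (blockKron m n ℓ ε η A B C (Ma, Mb)) /
                Real.sqrt ((ℓ : ℝ) + frobNorm A ^ 2 + frobNorm B ^ 2 + frobNorm C ^ 2 +
                  ∑ i, frobNorm (D i) ^ 2) →
            (0 < ε ∧ 0 < η →
              K ≤ g * (max η ε : ℝ) ^ 5 * Real.sqrt ((m : ℝ) + (n : ℝ))) ∧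
            ((ε = 0 ∨ η = 0) →
              K ≤ g * (max η ε : ℝ) ^ ((9 : ℝ) / 2) * Real.sqrt ((m : ℝ) + (n : ℝ))) := by
  refine ⟨10 ^ 7, by norm_num, ?_⟩
  intro 𝕜 _ m n ℓ ε η hm hn hℓ htmax A B C D Ma Mb _ hdata hM α β γ s f₁ f₂ f₃ K hα hβ hγ hs
    hf₁ hf₂ hf₃ hK
  simp only [max_le_iff] at hdata
  obtain ⟨⟨hA, hB⟩, hC, -⟩ := hdata
  have ht : (1 : ℝ) ≤ max (η : ℝ) ε := by exact_mod_cast htmax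
  have hX := one_add_mul_factors_le (specNorm_mem_Icc_of_frobNorm_le_one hA)
    (specNorm_mem_Icc_of_frobNorm_le_one hB) (specNorm_mem_Icc_of_frobNorm_le_one hC)
    ⟨pSpec_nonneg _, pSpec_blockKron_le hA hB hC hM⟩ ht hα hβ hγ hs hf₁ hf₂ hf₃
  have hR : (ℓ : ℝ) ≤ ℓ + frobNorm A ^ 2 + frobNorm B ^ 2 + frobNorm C ^ 2 +
      ∑ i, frobNorm (D i) ^ 2 := by
    simp only [add_assoc, le_add_iff_nonneg_right]
    positivity
  have hF := le_three_mul_sqrt_mul_sqrt_of_sq_le (pFrob_nonneg _)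
    (pFrob_blockKron_sq_le hA hB hC hM) hR hℓ hm hn (le_max_right _ _) (le_max_left _ _) ht
  have hK' := mul_mul_mul_mul_div_sqrt_le (Real.sqrt_nonneg (2 * min ((ε : ℝ) + 1) (η + 1)))
    (pFrob_nonneg _) (by positivity) hX hF ((Nat.cast_pos.2 hℓ).trans_le hR)
  rw [← hK] at hK'
  refine ⟨fun _ => hK'.trans
    (mul_le_of_le_two_mul_sqrt (sqrt_two_mul_min_le (le_max_right _ _) ht) ht), fun h0 => ?_⟩
  have hmin : min ((ε : ℝ) + 1) (η + 1) = 1 := by rcases h0 with rfl | rfl <;> simp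
  rw [hmin, mul_one] at hK'
  exact hK'.trans (sqrt_two_mul_le ht)
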